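/- Let Σ ∈ ℝ^{d×d} be a nonzero symmetric positive semidefinite matrix, let α > 0, and set ρ² = 3‖Σ‖_F² (r(Σ)² + α r(Σ²)). Then min{ 2ρ²/‖Σ‖_F², (ρ² − (Tr Σ)²)² / (‖Σ‖_F⁴ + ‖Σ‖²(ρ² − (Tr Σ)²)) } ≥ r(Σ)² + (α − 1) r(Σ²). -/

import Mathlib

open MeasureTheory ProbabilityTheory Matrix

noncomputable section

/-- The quadratic form `xᵀ U x`. -/
def qf {d : ℕ} (U : Matrix (Fin d) (Fin d) ℝ) (x : Fin d → ℝ) : ℝ :=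
  ∑ i, ∑ j, x i * U i j * x j

/-- The Frobenius norm of a matrix. -/
def frob {d : ℕ} (A : Matrix (Fin d) (Fin d) ℝ) : ℝ :=
  Real.sqrt (∑ i, ∑ j, (A i j) ^ 2)

/-- The operator (spectral) norm of a matrix. -/
def opNorm {d : ℕ} (A : Matrix (Fin d) (Fin d) ℝ) : ℝ :=
  ‖Matrix.toEuclideanCLM (𝕜 := ℝ) A‖

/-- The effective rank `r(A) = Tr(A) / ‖A‖`. -/
def effRank {d : ℕ} (A : Matrix (Fin d) (Fin d) ℝ) : ℝ :=
  A.trace / opNorm A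

/-- The tilted expectation `P_U f = E[f e^{ξᵀUξ}] / E[e^{ξᵀUξ}]`. -/
def tExp {Ω : Type*} [MeasurableSpace Ω] (μ : Measure Ω) {d : ℕ}
    (ξ : Ω → Fin d → ℝ) (U : Matrix (Fin d) (Fin d) ℝ) (f : Ω → ℝ) : ℝ :=
  (∫ ω, f ω * Real.exp (qf U (ξ ω)) ∂μ) / ∫ ω, Real.exp (qf U (ξ ω)) ∂μ

/-- Assumption A1: `P_U (ξᵀVξ - P_U ξᵀVξ)⁴ ≤ τ² ‖V‖_F⁴` whenever `‖U‖_F ≤ ρmax`. -/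
def AssumptionA1 {Ω : Type*} [MeasurableSpace Ω] (μ : Measure Ω) {d : ℕ}
    (ξ : Ω → Fin d → ℝ) (τ ρmax : ℝ) : Prop :=
  ∀ U V : Matrix (Fin d) (Fin d) ℝ, frob U ≤ ρmax →
    tExp μ ξ U (fun ω => (qf V (ξ ω) - tExp μ ξ U fun ω' => qf V (ξ ω')) ^ 4)
      ≤ τ ^ 2 * frob V ^ 4

/-- Assumption A2: `E (ξᵀVξ - E ξᵀVξ)⁴ ≤ α² ‖V‖_F⁴`. -/
def AssumptionA2 {Ω : Type*} [MeasurableSpace Ω] (μ : Measure Ω) {d : ℕ}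
    (ξ : Ω → Fin d → ℝ) (α : ℝ) : Prop :=
  ∀ V : Matrix (Fin d) (Fin d) ℝ,
    ∫ ω, (qf V (ξ ω) - ∫ ω', qf V (ξ ω') ∂μ) ^ 4 ∂μ ≤ α ^ 2 * frob V ^ 4

/-- The sample covariance matrix `(1/n) ∑ᵢ Xᵢ Xᵢᵀ`. -/
def sampleCov {Ω : Type*} {d n : ℕ} (Xs : Fin n → Ω → Fin d → ℝ) (ω : Ω) :
    Matrix (Fin d) (Fin d) ℝ :=
  (n : ℝ)⁻¹ • ∑ i, Matrix.vecMulVec (Xs i ω) (Xs i ω)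

/-- `v² = ‖E[vec(XXᵀ - Σ) vec(XXᵀ - Σ)ᵀ]‖_F²`, written entrywise. -/
def vsq {Ω : Type*} [MeasurableSpace Ω] (μ : Measure Ω) {d : ℕ}
    (X : Ω → Fin d → ℝ) (Sig : Matrix (Fin d) (Fin d) ℝ) : ℝ :=
  ∑ i, ∑ j, ∑ k, ∑ l,
    (∫ ω, (X ω i * X ω j - Sig i j) * (X ω k * X ω l - Sig k l) ∂μ) ^ 2

/-- `κ = sup_{‖U‖_F = 1} E[XᵀUX - Tr(UᵀΣ)]²`. -/
def kap {Ω : Type*} [MeasurableSpace Ω] (μ : Measure Ω) {d : ℕ}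
    (X : Ω → Fin d → ℝ) (Sig : Matrix (Fin d) (Fin d) ℝ) : ℝ :=
  sSup {x : ℝ | ∃ U : Matrix (Fin d) (Fin d) ℝ, frob U = 1 ∧
    x = ∫ ω, (qf U (X ω) - (Uᵀ * Sig).trace) ^ 2 ∂μ}

/-- The Orlicz `ψ₁`-norm with respect to the tilted measure `P_U`
(`U = 0` gives the ordinary `ψ₁`-norm). -/
def psi1T {Ω : Type*} [MeasurableSpace Ω] (μ : Measure Ω) {d : ℕ}
    (ξ : Ω → Fin d → ℝ) (U : Matrix (Fin d) (Fin d) ℝ) (f : Ω → ℝ) : ℝ :=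
  sInf {t : ℝ | 0 < t ∧
    ∫⁻ ω, ENNReal.ofReal (Real.exp (|f ω| / t) * Real.exp (qf U (ξ ω))) ∂μ
      ≤ 2 * ∫⁻ ω, ENNReal.ofReal (Real.exp (qf U (ξ ω))) ∂μ}

/-- `Xs` is a sample of i.i.d. copies of `X`. -/
def IsIIDSample {Ω : Type*} [MeasurableSpace Ω] (μ : Measure Ω) {d n : ℕ}
    (X : Ω → Fin d → ℝ) (Xs : Fin n → Ω → Fin d → ℝ) : Prop :=
  iIndepFun Xs μ ∧
    ∀ i, Measure.map (Xs i) μ = Measure.map X μ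

/-- `Γ` is a `d × d` random matrix with i.i.d. standard Gaussian entries. -/
def IsStdGaussianMatrix {Ω : Type*} [MeasurableSpace Ω] (μ : Measure Ω) {d : ℕ}
    (Γ : Ω → Fin d → Fin d → ℝ) : Prop :=
  iIndepFun (fun p : Fin d × Fin d => fun ω => Γ ω p.1 p.2) μ ∧
    ∀ i j, Measure.map (fun ω => Γ ω i j) μ = gaussianReal 0 1

/-- The complex tilted expectation `P_{iU} f = E[f e^{i ξᵀUξ}] / E[e^{i ξᵀUξ}]`. -/
def ctExp {Ω : Type*} [MeasurableSpace Ω] (μ : Measure Ω) {d : ℕ}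
    (ξ : Ω → Fin d → ℝ) (U : Matrix (Fin d) (Fin d) ℝ) (f : Ω → ℂ) : ℂ :=
  (∫ ω, f ω * Complex.exp (Complex.I * (qf U (ξ ω) : ℂ)) ∂μ) /
    ∫ ω, Complex.exp (Complex.I * (qf U (ξ ω) : ℂ)) ∂μ

/-!
Write `N = ‖Σ‖`, `F = ‖Σ‖_F`, `T = Tr Σ`. Since `Σ` is symmetric, `Tr Σ² = F²` and `‖Σ²‖ = N²`,
so `r(Σ) = T/N` and `r(Σ²) = F²/N²`; positive semidefiniteness gives `N ≤ F ≤ T`. In the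
normalised variables `a = (T/N)²`, `b = (F/N)²` (so `1 ≤ b ≤ a`) the second term of the minimum
is `c²/(b² + c)` with `c = 3b(a + αb) - a`, and the bound reduces to `c - s ≥ b²` for
`s = a + (α - 1)b`: then `c(c - s) ≥ c b² ≥ s b²`, i.e. `c² ≥ s(b² + c)`.
-/

open scoped Matrix.Norms.L2Operator

section NormsOfMatrices

variable {d : ℕ}

lemma frob_sq (A : Matrix (Fin d) (Fin d) ℝ) : frob A ^ 2 = ∑ i, ∑ j, A i j ^ 2 :=
  Real.sq_sqrt (by positivity)

lemma opNorm_eq_norm (A : Matrix (Fin d) (Fin d) ℝ) : opNorm A = ‖A‖ := rfl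

lemma opNorm_pos {A : Matrix (Fin d) (Fin d) ℝ} (hA : A ≠ 0) : 0 < opNorm A := by
  rw [opNorm_eq_norm]
  exact norm_pos_iff.mpr hA

lemma opNorm_le_frob (A : Matrix (Fin d) (Fin d) ℝ) : opNorm A ≤ frob A := by
  refine ContinuousLinearMap.opNorm_le_bound _ (Real.sqrt_nonneg _) fun x => ?_
  rw [toEuclideanCLM_toLp, EuclideanSpace.norm_eq, EuclideanSpace.norm_eq, frob,
    ← Real.sqrt_mul (by positivity)]
  refine Real.sqrt_le_sqrt ?_
  simp only [Real.norm_eq_abs, sq_abs]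
  rw [Finset.sum_mul]
  exact Finset.sum_le_sum fun i _ => Finset.sum_mul_sq_le_sq_mul_sq Finset.univ (A i) x.ofLp

lemma Matrix.IsHermitian.opNorm_sq {A : Matrix (Fin d) (Fin d) ℝ} (hA : A.IsHermitian) :
    opNorm (A ^ 2) = opNorm A ^ 2 := by
  simp only [opNorm_eq_norm]
  calc ‖A ^ 2‖ = ‖Aᴴ * A‖ := by rw [hA.eq, sq]
    _ = ‖A‖ ^ 2 := by rw [l2_opNorm_conjTranspose_mul_self, sq]

lemma Matrix.IsHermitian.trace_sq {A : Matrix (Fin d) (Fin d) ℝ} (hA : A.IsHermitian) :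
    (A ^ 2).trace = frob A ^ 2 := by
  rw [frob_sq, sq, trace, Finset.sum_congr rfl]
  intro i _
  simp only [diag_apply, mul_apply, sq]
  refine Finset.sum_congr rfl fun j _ => ?_
  rw [← hA.apply i j, star_trivial]

lemma Matrix.IsHermitian.effRank_sq {A : Matrix (Fin d) (Fin d) ℝ} (hA : A.IsHermitian) :
    effRank (A ^ 2) = frob A ^ 2 / opNorm A ^ 2 := by
  rw [effRank, hA.trace_sq, hA.opNorm_sq]

lemma Matrix.PosSemidef.sq_apply_le {A : Matrix (Fin d) (Fin d) ℝ} (hA : A.PosSemidef)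
    (i j : Fin d) : A i j ^ 2 ≤ A i i * A j j := by
  obtain ⟨B, rfl⟩ : ∃ B : Matrix (Fin d) (Fin d) ℝ, A = Bᴴ * B := by
    open scoped MatrixOrder in
    exact CStarAlgebra.nonneg_iff_eq_star_mul_self.mp hA.nonneg
  simp only [mul_apply, conjTranspose_apply, star_trivial]
  simpa only [sq] using Finset.sum_mul_sq_le_sq_mul_sq Finset.univ (B · i) (B · j)

lemma Matrix.PosSemidef.frob_le_trace {A : Matrix (Fin d) (Fin d) ℝ} (hA : A.PosSemidef) :
    frob A ≤ A.trace := by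
  refine abs_le_of_sq_le_sq' ?_ hA.trace_nonneg |>.2
  calc frob A ^ 2 = ∑ i, ∑ j, A i j ^ 2 := frob_sq A
    _ ≤ ∑ i, ∑ j, A i i * A j j :=
      Finset.sum_le_sum fun i _ => Finset.sum_le_sum fun j _ => hA.sq_apply_le i j
    _ = A.trace ^ 2 := by rw [← Finset.sum_mul_sum, sq]; rfl

end NormsOfMatrices

lemma le_sq_div_sq_add {a b α : ℝ} (hb : 1 ≤ b) (hab : b ≤ a) (hα : 0 < α) :
    a + (α - 1) * b ≤
      (3 * b * (a + α * b) - a) ^ 2 / (b ^ 2 + (3 * b * (a + α * b) - a)) := by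
  set s := a + (α - 1) * b
  set c := 3 * b * (a + α * b) - a
  have hgap : b ^ 2 ≤ c - s := by
    have : 0 ≤ α * (3 * b ^ 2 - b) := mul_nonneg hα.le (by nlinarith)
    nlinarith
  have hc : 0 < c := by nlinarith
  rw [le_div_iff₀ (by positivity)]
  nlinarith [mul_le_mul_of_nonneg_left hgap hc.le, mul_le_mul_of_nonneg_right
    (show s ≤ c by nlinarith) (sq_nonneg b)]

lemma add_sub_one_mul_le_min_of_le_of_le {N F T α : ℝ} (hN : 0 < N) (hNF : N ≤ F)
    (hFT : F ≤ T) (hα : 0 < α) :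
    (T / N) ^ 2 + (α - 1) * (F ^ 2 / N ^ 2) ≤
      min (2 * (3 * F ^ 2 * ((T / N) ^ 2 + α * (F ^ 2 / N ^ 2))) / F ^ 2)
        ((3 * F ^ 2 * ((T / N) ^ 2 + α * (F ^ 2 / N ^ 2)) - T ^ 2) ^ 2 /
          (F ^ 4 + N ^ 2 * (3 * F ^ 2 * ((T / N) ^ 2 + α * (F ^ 2 / N ^ 2)) - T ^ 2))) := by
  have hF0 : 0 < F := hN.trans_le hNF
  set a := (T / N) ^ 2 with ha
  set b := F ^ 2 / N ^ 2 with hb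
  have hb1 : 1 ≤ b := by rw [hb, one_le_div (by positivity)]; gcongr
  have hab : b ≤ a := by rw [hb, ha, div_pow]; gcongr
  have hF : F ^ 2 = b * N ^ 2 := by rw [hb]; field_simp
  have hT : T ^ 2 = a * N ^ 2 := by rw [ha]; field_simp
  refine le_min ?_ ?_
  · rw [mul_div_assoc, mul_comm 3, mul_assoc, mul_div_cancel_left₀ _ (by positivity)]
    nlinarith
  · have hnum : 3 * F ^ 2 * (a + α * b) - T ^ 2 = N ^ 2 * (3 * b * (a + α * b) - a) := by
      rw [hF, hT]; ring
    have hden : F ^ 4 + N ^ 2 * (3 * F ^ 2 * (a + α * b) - T ^ 2)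
        = N ^ 4 * (b ^ 2 + (3 * b * (a + α * b) - a)) := by
      rw [hnum, show F ^ 4 = (F ^ 2) ^ 2 by ring, hF]; ring
    rw [hden, hnum, mul_pow, ← pow_mul, mul_div_mul_left _ _ (by positivity)]
    exact le_sq_div_sq_add hb1 hab hα

/-- Lemma on `ρ`: with `ρ² = 3‖Σ‖_F²(r(Σ)² + α r(Σ²))`, a lower bound on
`min{2ρ²/‖Σ‖_F², (ρ² - (Tr Σ)²)²/(‖Σ‖_F⁴ + ‖Σ‖²(ρ² - (Tr Σ)²))}`. -/
theorem statement12 {d : ℕ} (Sig : Matrix (Fin d) (Fin d) ℝ)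
    (hSig : Sig.PosSemidef) (hne : Sig ≠ 0)
    (α : ℝ) (hα : 0 < α) (ρsq : ℝ)
    (hρ : ρsq = 3 * frob Sig ^ 2 * (effRank Sig ^ 2 + α * effRank (Sig ^ 2))) :
    effRank Sig ^ 2 + (α - 1) * effRank (Sig ^ 2) ≤
      min (2 * ρsq / frob Sig ^ 2)
        ((ρsq - Sig.trace ^ 2) ^ 2 /
          (frob Sig ^ 4 + opNorm Sig ^ 2 * (ρsq - Sig.trace ^ 2))) := by
  subst hρ
  rw [hSig.isHermitian.effRank_sq, effRank]
  exact add_sub_one_mul_le_min_of_le_of_le (opNorm_pos hne) (opNorm_le_frob Sig)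
    hSig.frob_le_trace hα
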